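/- Let T be a nonzero hyponormal absolutely norm attaining operator on a complex Hilbert space H with σ_ess(|T|) = {‖T‖}, and suppose that π_00(|T|) is nonempty and equal to a finite set {λ_1, …, λ_{m_0}}. Set H_1 = N(|T| − ‖T‖I) and H_2 = ⊕_{i=1}^{m_0} N(|T| − λ_i I). Then H = H_1 ⊕ H_2 is an orthogonal decomposition, H_1 is invariant under T, and with respect to this decomposition T has the block form T = [[‖T‖S_0, A],[0, B]], where S_0 ∈ B(H_1) is an isometry, A : H_2 → H_1 and B : H_2 → H_2 are finite-rank operators satisfying S_0*A = 0 and (A + B)*(A + B) = ⊕_{i=1}^{m_0} λ_i² I restricted to N(|T| − λ_i I). -/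

import Mathlib

noncomputable section

variable {H : Type*} [NormedAddCommGroup H] [InnerProductSpace ℂ H] [CompleteSpace H]

/-- The restriction of `T` to the subspace `M` attains its norm:
there is a unit vector `x ∈ M` with `‖T x‖ = sup {‖T y‖ : y ∈ M, ‖y‖ = 1}`. -/
def NormAttainingOn (T : H →L[ℂ] H) (M : Submodule ℂ H) : Prop :=
  ∃ x ∈ M, ‖x‖ = 1 ∧ ‖T x‖ = sSup {r : ℝ | ∃ y ∈ M, ‖y‖ = 1 ∧ r = ‖T y‖}

/-- `T` is absolutely norm attaining (an `𝒜𝒩`-operator): its restriction to every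
nonzero closed subspace attains its norm. -/
def IsANOperator (T : H →L[ℂ] H) : Prop :=
  ∀ M : Submodule ℂ H, IsClosed (M : Set H) → M ≠ ⊥ → NormAttainingOn T M

/-- The restriction of `T` to the subspace `M` attains its minimum modulus. -/
def MinAttainingOn (T : H →L[ℂ] H) (M : Submodule ℂ H) : Prop :=
  ∃ x ∈ M, ‖x‖ = 1 ∧ ‖T x‖ = sInf {r : ℝ | ∃ y ∈ M, ‖y‖ = 1 ∧ r = ‖T y‖}

/-- `T` is absolutely minimum attaining (an `𝒜ℳ`-operator). -/
def IsAMOperator (T : H →L[ℂ] H) : Prop :=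
  ∀ M : Submodule ℂ H, IsClosed (M : Set H) → M ≠ ⊥ → MinAttainingOn T M

/-- A Fredholm operator: closed range and finite dimensional kernel and co-kernel
(kernel of the adjoint). -/
def IsFredholmOp (T : H →L[ℂ] H) : Prop :=
  IsClosed (LinearMap.range (T : H →ₗ[ℂ] H) : Set H) ∧
    FiniteDimensional ℂ (LinearMap.ker (T : H →ₗ[ℂ] H)) ∧
    FiniteDimensional ℂ (LinearMap.ker ((ContinuousLinearMap.adjoint T : H →L[ℂ] H) : H →ₗ[ℂ] H))

/-- The essential spectrum: the set of `z` such that `T - z I` is not Fredholm. -/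
def essSpectrum (T : H →L[ℂ] H) : Set ℂ :=
  {z : ℂ | ¬ IsFredholmOp (T - z • (1 : H →L[ℂ] H))}

/-- The Fredholm index `dim N(T) - dim N(T*)`. -/
def fredholmIndex (T : H →L[ℂ] H) : ℤ :=
  (Module.finrank ℂ (LinearMap.ker (T : H →ₗ[ℂ] H)) : ℤ) -
    (Module.finrank ℂ (LinearMap.ker ((ContinuousLinearMap.adjoint T : H →L[ℂ] H) : H →ₗ[ℂ] H)) : ℤ)

/-- The Weyl spectrum: the set of `z` such that `T - z I` is not Fredholm of index `0`. -/
def weylSpectrum (T : H →L[ℂ] H) : Set ℂ :=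
  {z : ℂ | ¬ (IsFredholmOp (T - z • (1 : H →L[ℂ] H)) ∧
      fredholmIndex (T - z • (1 : H →L[ℂ] H)) = 0)}

/-- `T` is hyponormal: `T*T - TT* ≥ 0`. -/
def Hyponormal (T : H →L[ℂ] H) : Prop :=
  (ContinuousLinearMap.adjoint T * T - T * ContinuousLinearMap.adjoint T).IsPositive

/-- `T` is paranormal: `‖T x‖² ≤ ‖T² x‖ ‖x‖` for all `x`. -/
def Paranormal (T : H →L[ℂ] H) : Prop :=
  ∀ x : H, ‖T x‖ ^ 2 ≤ ‖T (T x)‖ * ‖x‖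

/-- `|T|`, the unique positive square root of `T*T`. -/
def opAbs (T : H →L[ℂ] H) : H →L[ℂ] H :=
  CFC.sqrt (ContinuousLinearMap.adjoint T * T)

/-- `π₀₀(T)`: the set of isolated eigenvalues of `T` of finite multiplicity. -/
def pi00 (T : H →L[ℂ] H) : Set ℂ :=
  {z : ℂ | z ∈ spectrum ℂ T ∧
    (∃ U : Set ℂ, IsOpen U ∧ U ∩ spectrum ℂ T = {z}) ∧
    LinearMap.ker ((T - z • (1 : H →L[ℂ] H) : H →L[ℂ] H) : H →ₗ[ℂ] H) ≠ ⊥ ∧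
    FiniteDimensional ℂ (LinearMap.ker ((T - z • (1 : H →L[ℂ] H) : H →L[ℂ] H) : H →ₗ[ℂ] H))}

/-!
For the self-adjoint operator `|T|`, a spectral point `μ` is an isolated eigenvalue of finite
multiplicity exactly when `|T| - μ` is Fredholm: at an isolated point the functional calculus
gives `|T| - μ` a generalized inverse, hence closed range; conversely a closed range makes
`|T| - μ` bounded below on `(ker (|T| - μ))ᗮ`, so `|T| - ν` is bounded below, hence invertible,
for all `ν ≠ μ` close to `μ`. Therefore `σ(|T|) ⊆ {‖T‖, λ₁, …, λ_{m₀}}` is finite, and the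
spectral projections of `|T|` decompose `H` into the mutually orthogonal eigenspaces `H₁ ⊕ H₂`.

On `H₁` we have `T*T = ‖T‖²`, so `T` attains its norm there; hyponormality gives
`‖T‖ ‖T x‖ = ‖T*T x‖ ≤ ‖T (T x)‖`, so `T x` attains it as well, and `H₁` is `T`-invariant.
With `P` the orthogonal projection onto `H₁`, the blocks are `‖T‖ S₀ = T P`,
`A = P T (1 - P)` and `B = (1 - P) T (1 - P)`; invariance gives `P T* P = P T*`, whence
`S₀* A = ‖T‖⁻¹ P T* T (1 - P) = ‖T‖ P (1 - P) = 0`.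
-/

open ContinuousLinearMap

section NormedSpace

variable {𝕜 E : Type*} [NontriviallyNormedField 𝕜] [NormedAddCommGroup E] [NormedSpace 𝕜 E]

theorem mem_ker_sub_smul_one_iff {S : E →L[𝕜] E} {c : 𝕜} {x : E} :
    x ∈ LinearMap.ker ((S - c • (1 : E →L[𝕜] E) : E →L[𝕜] E) : E →ₗ[𝕜] E) ↔ S x = c • x := by
  simp [sub_eq_zero]

theorem mem_spectrum_iff_not_isUnit_sub_smul_one {S : E →L[𝕜] E} {μ : 𝕜} :
    μ ∈ spectrum 𝕜 S ↔ ¬ IsUnit (S - μ • (1 : E →L[𝕜] E)) := by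
  rw [spectrum.mem_iff, Algebra.algebraMap_eq_smul_one, ← neg_sub, IsUnit.neg_iff]

theorem ContinuousLinearMap.isClosed_range_of_mul_mul_self {f : E →L[𝕜] E} (g : E →L[𝕜] E)
    (h : f * g * f = f) : IsClosed (Set.range f) := by
  -- the range of `f` is the fixed-point set of the idempotent `f * g`
  have : Set.range f = {x | (f * g) x = x} := by
    ext x
    refine ⟨?_, fun hx => ⟨g x, hx⟩⟩
    rintro ⟨y, rfl⟩
    exact congr($h y)
  rw [this]
  exact isClosed_eq (f * g).continuous continuous_id

end NormedSpace

section InnerProductSpace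

variable {𝕜 E F : Type*} [RCLike 𝕜] [NormedAddCommGroup E] [InnerProductSpace 𝕜 E]
  [NormedAddCommGroup F] [InnerProductSpace 𝕜 F]

theorem Submodule.IsOrtho.eq_orthogonal_of_sup_eq_top {U V : Submodule 𝕜 E} (h : U ⟂ V)
    (hsup : U ⊔ V = ⊤) : V = Uᗮ := by
  have := sup_inf_assoc_of_le U h.ge
  rwa [sup_comm, hsup, top_inf_eq, Submodule.inf_orthogonal_eq_bot, sup_bot_eq, eq_comm] at this

theorem finiteDimensional_range_mul_starProjection (f : E →L[𝕜] E) (K : Submodule 𝕜 E)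
    [K.HasOrthogonalProjection] [FiniteDimensional 𝕜 K] :
    FiniteDimensional 𝕜 (LinearMap.range ((f * K.starProjection : E →L[𝕜] E) : E →ₗ[𝕜] E)) := by
  rw [toLinearMap_mul, Module.End.mul_eq_comp, LinearMap.range_comp]
  have : LinearMap.range (K.starProjection : E →ₗ[𝕜] E) = K := K.range_starProjection
  rw [this]
  infer_instance

variable [CompleteSpace E] [CompleteSpace F]

instance IsStarNormal.sub_smul_one {S : E →L[𝕜] E} [IsStarNormal S] (μ : 𝕜) :
    IsStarNormal (S - μ • (1 : E →L[𝕜] E)) :=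
  Commute.isStarNormal_sub (by rw [star_smul, star_one]; exact (Commute.one_right S).smul_right _)

theorem ContinuousLinearMap.norm_apply_eq_of_adjoint_apply_apply_eq (T : E →L[𝕜] F) {c : ℝ}
    (hc : 0 ≤ c) {x : E} (hx : adjoint T (T x) = ((c : 𝕜) ^ 2) • x) : ‖T x‖ = c * ‖x‖ := by
  have h := apply_norm_sq_eq_inner_adjoint_left T x
  rw [comp_apply, hx, inner_smul_left, inner_self_eq_norm_sq_to_K] at h
  norm_cast at h
  simp only [map_pow, RCLike.conj_ofReal, RCLike.mul_re, RCLike.re_ofReal_pow,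
    RCLike.im_ofReal_pow, mul_zero, sub_zero] at h
  rw [← mul_pow] at h
  exact (pow_left_inj₀ (norm_nonneg _) (by positivity) two_ne_zero).1 h

theorem ContinuousLinearMap.adjoint_apply_apply_eq_of_norm_apply_eq (T : E →L[𝕜] F) {x : E}
    (hx : ‖T x‖ = ‖T‖ * ‖x‖) : adjoint T (T x) = ((‖T‖ : 𝕜) ^ 2) • x := by
  set c := ‖T‖
  have hre : RCLike.re (inner 𝕜 (adjoint T (T x)) (((c : 𝕜) ^ 2) • x)) = c ^ 4 * ‖x‖ ^ 2 := by
    rw [inner_smul_right, adjoint_inner_left, inner_self_eq_norm_sq_to_K, hx]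
    norm_cast
    ring
  have hle : ‖adjoint T (T x)‖ ≤ c * (c * ‖x‖) := by
    rw [← hx]
    simpa using le_opNorm (adjoint T) (T x)
  have hsmul : ‖((c : 𝕜) ^ 2) • x‖ = c ^ 2 * ‖x‖ := by
    rw [norm_smul, norm_pow, RCLike.norm_ofReal, abs_norm]
  have hsq : ‖adjoint T (T x) - ((c : 𝕜) ^ 2) • x‖ ^ 2 ≤ 0 := by
    rw [@norm_sub_sq 𝕜, hre, hsmul]
    nlinarith [norm_nonneg (adjoint T (T x)), norm_nonneg x, norm_nonneg T]
  exact sub_eq_zero.mp (norm_eq_zero.mp (pow_eq_zero_iff two_ne_zero |>.mp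
    (le_antisymm hsq (sq_nonneg _))))

theorem IsSelfAdjoint.isOrtho_ker_sub_smul_one {S : E →L[𝕜] E} (hS : IsSelfAdjoint S) {a b : 𝕜}
    (hab : a ≠ b) :
    LinearMap.ker ((S - a • (1 : E →L[𝕜] E) : E →L[𝕜] E) : E →ₗ[𝕜] E) ⟂
      LinearMap.ker ((S - b • (1 : E →L[𝕜] E) : E →L[𝕜] E) : E →ₗ[𝕜] E) := by
  simpa [Module.End.eigenspace_def] using hS.isSymmetric.orthogonalFamily_eigenspaces.isOrtho hab

theorem ContinuousLinearMap.exists_pos_mul_norm_le_of_isClosed_range (f : E →L[𝕜] E)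
    (hf : IsClosed (Set.range f)) :
    ∃ δ > 0, ∀ w ∈ (LinearMap.ker (f : E →ₗ[𝕜] E))ᗮ, δ * ‖w‖ ≤ ‖f w‖ := by
  set K := LinearMap.ker (f : E →ₗ[𝕜] E)
  have : CompleteSpace K := f.isClosed_ker.completeSpace_coe
  set g : Kᗮ →L[𝕜] E := f ∘L Kᗮ.subtypeL
  have hinj : Function.Injective g := by
    refine (injective_iff_map_eq_zero g).2 fun w hw => Subtype.ext ?_
    exact (Submodule.inf_orthogonal_eq_bot K).le ⟨hw, w.2⟩
  have hrange : Set.range g = Set.range f := by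
    refine (Set.range_comp_subset_range (Subtype.val : Kᗮ → E) f).antisymm ?_
    rintro _ ⟨x, rfl⟩
    refine ⟨⟨Kᗮ.starProjection x, Kᗮ.starProjection_apply_mem x⟩, ?_⟩
    have hk : f (K.starProjection x) = 0 := LinearMap.mem_ker.mp (K.starProjection_apply_mem x)
    simp [Submodule.starProjection_orthogonal_val, hk]
  obtain ⟨C, hC⟩ := g.antilipschitz_of_injective_of_isClosed_range hinj (hrange ▸ hf)
  refine ⟨((C : ℝ) + 1)⁻¹, by positivity, fun w hw => ?_⟩
  have := g.bound_of_antilipschitz hC ⟨w, hw⟩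
  rw [inv_mul_le_iff₀ (by positivity)]
  change ‖w‖ ≤ C * ‖f w‖ at this
  nlinarith [norm_nonneg (f w)]

theorem IsStarNormal.isUnit_of_injective_of_isClosed_range {N : E →L[𝕜] E} (hN : IsStarNormal N)
    (hinj : Function.Injective N) (hcl : IsClosed (Set.range N)) : IsUnit N := by
  have : CompleteSpace (LinearMap.range (N : E →ₗ[𝕜] E)) := by
    rw [← coe_coe, ← LinearMap.coe_range] at hcl
    exact hcl.completeSpace_coe
  have hdense : (LinearMap.range (N : E →ₗ[𝕜] E))ᗮ = ⊥ := by
    rw [hN.orthogonal_range]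
    exact LinearMap.ker_eq_bot.mpr hinj
  refine isUnit_iff_bijective.mpr ⟨hinj, LinearMap.range_eq_top.mp ?_⟩
  exact Submodule.orthogonal_eq_bot_iff.mp hdense

theorem IsStarNormal.isUnit_of_forall_mul_norm_le {N : E →L[𝕜] E} (hN : IsStarNormal N) {c : ℝ}
    (hc : 0 < c) (h : ∀ x, c * ‖x‖ ≤ ‖N x‖) : IsUnit N := by
  have hN' : AntilipschitzWith ⟨c⁻¹, by positivity⟩ N := N.antilipschitz_of_bound fun x => by
    change ‖x‖ ≤ c⁻¹ * ‖N x‖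
    rw [le_inv_mul_iff₀ hc]
    exact h x
  exact hN.isUnit_of_injective_of_isClosed_range hN'.injective
    (hN'.isClosed_range N.uniformContinuous)

theorem IsStarNormal.mul_norm_le_norm_sub_smul_one_apply {f : E →L[𝕜] E} (hf : IsStarNormal f)
    {δ : ℝ} (hδ : ∀ w ∈ (LinearMap.ker (f : E →ₗ[𝕜] E))ᗮ, δ * ‖w‖ ≤ ‖f w‖) {c : 𝕜}
    (hc : 2 * ‖c‖ ≤ δ) (x : E) : ‖c‖ * ‖x‖ ≤ ‖(f - c • (1 : E →L[𝕜] E)) x‖ := by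
  -- normality puts the range of `f` inside `(ker f)ᗮ`, so `f - c` splits along `ker f ⊕ (ker f)ᗮ`
  have hrange : ∀ y, f y ∈ (LinearMap.ker (f : E →ₗ[𝕜] E))ᗮ := fun y =>
    hf.orthogonal_range ▸ Submodule.le_orthogonal_orthogonal _ (LinearMap.mem_range_self _ y)
  set K := LinearMap.ker (f : E →ₗ[𝕜] E)
  have : CompleteSpace K := f.isClosed_ker.completeSpace_coe
  obtain ⟨k, hk, w, hw, rfl⟩ : ∃ k ∈ K, ∃ w ∈ Kᗮ, x = k + w :=
    ⟨_, K.starProjection_apply_mem x, _, Kᗮ.starProjection_apply_mem x,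
      (K.starProjection_add_starProjection_orthogonal x).symm⟩
  have hsplit : (f - c • (1 : E →L[𝕜] E)) (k + w) = (f w - c • w) + -(c • k) := by
    have hfk : f k = 0 := hk
    simp only [sub_apply, smul_apply, one_apply_eq_self, map_add, hfk]
    abel
  have horth : inner 𝕜 (f w - c • w) (-(c • k)) = 0 :=
    Submodule.inner_left_of_mem_orthogonal (K.neg_mem (K.smul_mem c hk))
      (Kᗮ.sub_mem (hrange w) (Kᗮ.smul_mem c hw))
  have hfw : ‖c‖ * ‖w‖ ≤ ‖f w - c • w‖ := by
    have h1 := norm_sub_norm_le (f w) (c • w)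
    have h2 := hδ w hw
    rw [norm_smul] at h1
    nlinarith [norm_nonneg w]
  have hx := norm_add_sq_eq_norm_sq_add_norm_sq_of_inner_eq_zero k w
    (Submodule.inner_right_of_mem_orthogonal hk hw)
  have hcx : ‖c‖ * ‖k + w‖ * (‖c‖ * ‖k + w‖) =
      ‖c‖ * ‖w‖ * (‖c‖ * ‖w‖) + ‖c‖ * ‖k‖ * (‖c‖ * ‖k‖) := by
    rw [mul_mul_mul_comm, hx]
    ring
  refine (mul_self_le_mul_self_iff (by positivity) (norm_nonneg _)).mpr ?_
  rw [hsplit, norm_add_sq_eq_norm_sq_add_norm_sq_of_inner_eq_zero _ _ horth, norm_neg, norm_smul]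
  linarith [mul_self_le_mul_self (by positivity) hfw]

end InnerProductSpace

theorem cfc_sub_const (S : H →L[ℂ] H) [IsStarNormal S] (μ : ℂ) :
    cfc (fun z => z - μ) S = S - μ • (1 : H →L[ℂ] H) := by
  rw [cfc_sub (fun z : ℂ => z) (fun _ => μ), cfc_id' ℂ S, cfc_const μ S,
    Algebra.algebraMap_eq_smul_one]

theorem IsStarNormal.isClosed_range_sub_smul_one {S : H →L[ℂ] H} [IsStarNormal S] {μ : ℂ}
    (hiso : ∃ U : Set ℂ, IsOpen U ∧ U ∩ spectrum ℂ S = {μ}) :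
    IsClosed (LinearMap.range ((S - μ • (1 : H →L[ℂ] H) : H →L[ℂ] H) : H →ₗ[ℂ] H) : Set H) := by
  obtain ⟨U, hU, hUσ⟩ := hiso
  -- `z ↦ (z - μ)⁻¹` (with `0⁻¹ = 0`) is continuous on the spectrum because `μ` is isolated in it
  have hg : ContinuousOn (fun z : ℂ => (z - μ)⁻¹) (spectrum ℂ S) := by
    intro z hz
    rcases eq_or_ne z μ with rfl | hzμ
    · have hzU : z ∈ U := (hUσ.symm ▸ rfl : z ∈ U ∩ spectrum ℂ S).1
      rw [← continuousWithinAt_inter (hU.mem_nhds hzU), Set.inter_comm, hUσ]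
      exact continuousWithinAt_singleton
    · exact ((continuous_id.sub continuous_const).continuousAt.inv₀
        (sub_ne_zero.mpr hzμ)).continuousWithinAt
  rw [LinearMap.coe_range, coe_coe]
  apply isClosed_range_of_mul_mul_self (cfc (fun z : ℂ => (z - μ)⁻¹) S)
  rw [← cfc_sub_const, ← cfc_mul _ _ S (by fun_prop) hg, ← cfc_mul _ _ S _ (by fun_prop)]
  · exact cfc_congr fun z _ => mul_inv_mul_cancel (z - μ)
  · exact (continuousOn_id.sub continuousOn_const).mul hg

theorem IsStarNormal.exists_isUnit_sub_smul_one_of_isClosed_range {S : H →L[ℂ] H}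
    [IsStarNormal S] {μ : ℂ} (hcl : IsClosed (Set.range (S - μ • (1 : H →L[ℂ] H)))) :
    ∃ ε > 0, ∀ ν, ν ≠ μ → dist ν μ < ε → IsUnit (S - ν • (1 : H →L[ℂ] H)) := by
  obtain ⟨δ, hδ, hbound⟩ := exists_pos_mul_norm_le_of_isClosed_range _ hcl
  refine ⟨δ / 2, by positivity, fun ν hne hν => ?_⟩
  have heq : S - ν • (1 : H →L[ℂ] H) = (S - μ • 1) - (ν - μ) • 1 := by
    rw [sub_smul]
    abel
  rw [dist_eq_norm] at hν
  rw [heq]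
  exact IsStarNormal.isUnit_of_forall_mul_norm_le inferInstance
    (norm_pos_iff.mpr (sub_ne_zero.mpr hne))
    (IsStarNormal.mul_norm_le_norm_sub_smul_one_apply inferInstance hbound (by linarith))

theorem IsStarNormal.notMem_essSpectrum_of_mem_pi00 {S : H →L[ℂ] H} [IsStarNormal S] {μ : ℂ}
    (hμ : μ ∈ pi00 S) : μ ∉ essSpectrum S := fun hess =>
  hess ⟨IsStarNormal.isClosed_range_sub_smul_one hμ.2.1, hμ.2.2.2, by
    rw [IsStarNormal.ker_adjoint_eq_ker inferInstance]
    exact hμ.2.2.2⟩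

theorem IsStarNormal.mem_pi00_of_isFredholmOp {S : H →L[ℂ] H} [IsStarNormal S] {μ : ℂ}
    (hμ : μ ∈ spectrum ℂ S) (hF : IsFredholmOp (S - μ • (1 : H →L[ℂ] H))) : μ ∈ pi00 S := by
  obtain ⟨hcl, hfd, -⟩ := hF
  rw [LinearMap.coe_range, coe_coe] at hcl
  obtain ⟨ε, hε, hunit⟩ := IsStarNormal.exists_isUnit_sub_smul_one_of_isClosed_range hcl
  refine ⟨hμ, ⟨Metric.ball μ ε, Metric.isOpen_ball, ?_⟩, fun hker => ?_, hfd⟩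
  · refine Set.eq_singleton_iff_unique_mem.mpr ⟨⟨Metric.mem_ball_self hε, hμ⟩, ?_⟩
    rintro ν ⟨hνε, hνσ⟩
    by_contra hne
    exact mem_spectrum_iff_not_isUnit_sub_smul_one.mp hνσ (hunit ν hne hνε)
  · exact mem_spectrum_iff_not_isUnit_sub_smul_one.mp hμ
      (IsStarNormal.isUnit_of_injective_of_isClosed_range inferInstance
        (LinearMap.ker_eq_bot.mp hker) hcl)

theorem IsStarNormal.spectrum_subset_essSpectrum_union_pi00 {S : H →L[ℂ] H} [IsStarNormal S] :
    spectrum ℂ S ⊆ essSpectrum S ∪ pi00 S := fun μ hμ =>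
  (em (μ ∈ essSpectrum S)).imp_right fun h => mem_pi00_of_isFredholmOp hμ (not_not.mp h)

theorem IsStarNormal.iSup_ker_sub_smul_one_eq_top {S : H →L[ℂ] H} [IsStarNormal S]
    {F : Finset ℂ} (hF : spectrum ℂ S ⊆ F) :
    ⨆ μ ∈ F, LinearMap.ker ((S - μ • (1 : H →L[ℂ] H) : H →L[ℂ] H) : H →ₗ[ℂ] H) = ⊤ := by
  classical
  -- the spectral projections `e μ = 1_{μ}(S)` add up to `1`, and `(S - μ) e μ = 0`
  let e μ := cfc (fun z : ℂ => if z = μ then (1 : ℂ) else 0) S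
  have hcont (f : ℂ → ℂ) : ContinuousOn f (spectrum ℂ S) :=
    (F.finite_toSet.subset hF).continuousOn f
  have hsum : ∑ μ ∈ F, e μ = 1 := by
    rw [← cfc_sum _ _ _ fun μ _ => hcont _, ← cfc_one ℂ S]
    exact cfc_congr fun z hz => by simp [Finset.mem_coe.mp (hF hz)]
  have hker (μ : ℂ) (x : H) : (S - μ • (1 : H →L[ℂ] H)) (e μ x) = 0 := by
    rw [← mul_apply_eq_comp, ← cfc_sub_const, ← cfc_mul _ _ S (hcont _) (hcont _),
      cfc_congr (g := 0) fun z _ => by by_cases h : z = μ <;> simp [h], cfc_zero, zero_apply]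
  refine eq_top_iff.mpr fun x _ => ?_
  have hx : x = ∑ μ ∈ F, e μ x := by rw [← sum_apply, hsum, one_apply_eq_self]
  rw [hx]
  exact Submodule.sum_mem _ fun μ hμ =>
    Submodule.mem_iSup_of_mem μ (Submodule.mem_iSup_of_mem hμ (hker μ x))

theorem IsStarNormal.ker_sup_iSup_ker_eq_top {S : H →L[ℂ] H} [IsStarNormal S] {ι : Type*}
    [Finite ι] {a : ℂ} {μ : ι → ℂ} (hess : essSpectrum S ⊆ {a}) (hpi : pi00 S ⊆ Set.range μ) :
    LinearMap.ker ((S - a • (1 : H →L[ℂ] H) : H →L[ℂ] H) : H →ₗ[ℂ] H) ⊔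
      ⨆ i, LinearMap.ker ((S - μ i • (1 : H →L[ℂ] H) : H →L[ℂ] H) : H →ₗ[ℂ] H) = ⊤ := by
  have hfin : (insert a (Set.range μ)).Finite := (Set.finite_range μ).insert a
  have hσ : spectrum ℂ S ⊆ hfin.toFinset := by
    rw [Set.Finite.coe_toFinset, Set.insert_eq]
    exact spectrum_subset_essSpectrum_union_pi00.trans (Set.union_subset_union hess hpi)
  refine eq_top_iff.mpr ((iSup_ker_sub_smul_one_eq_top hσ).ge.trans (iSup₂_le fun ν hν => ?_))
  rcases hfin.mem_toFinset.mp hν with rfl | ⟨i, rfl⟩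
  · exact le_sup_left
  · exact le_sup_of_le_right (le_iSup (fun i => LinearMap.ker
      ((S - μ i • (1 : H →L[ℂ] H) : H →L[ℂ] H) : H →ₗ[ℂ] H)) i)

theorem isSelfAdjoint_opAbs (T : H →L[ℂ] H) : IsSelfAdjoint (opAbs T) :=
  (CFC.abs_nonneg T).isSelfAdjoint

theorem opAbs_apply_opAbs_apply (T : H →L[ℂ] H) (x : H) :
    opAbs T (opAbs T x) = adjoint T (T x) := by
  rw [← mul_apply_eq_comp, ← mul_apply_eq_comp (adjoint T)]
  exact congr($(CFC.abs_mul_abs T) x)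

theorem adjoint_apply_apply_of_opAbs_apply {T : H →L[ℂ] H} {r : ℂ} {x : H}
    (hx : opAbs T x = r • x) : adjoint T (T x) = r ^ 2 • x := by
  rw [← opAbs_apply_opAbs_apply, hx, map_smul, hx, smul_smul, sq]

theorem opAbs_apply_eq_smul_iff (T : H →L[ℂ] H) {r : ℝ} (hr : 0 < r) (x : H) :
    opAbs T x = (r : ℂ) • x ↔ adjoint T (T x) = ((r : ℂ) ^ 2) • x := by
  refine ⟨adjoint_apply_apply_of_opAbs_apply, fun hx => ?_⟩
  set y := opAbs T x - (r : ℂ) • x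
  -- `y` is an eigenvector of the positive operator `|T|` for the eigenvalue `-r < 0`
  have hy : opAbs T y = -((r : ℂ) • y) := by
    simp only [y, map_sub, map_smul, opAbs_apply_opAbs_apply, hx, smul_sub, smul_smul, sq]
    abel
  have hpos := ((nonneg_iff_isPositive _).mp (CFC.abs_nonneg T)).re_inner_nonneg_left y
  have hre : RCLike.re (inner ℂ (opAbs T y) y) = -(r * ‖y‖ ^ 2) := by
    rw [hy, inner_neg_left, inner_smul_left, inner_self_eq_norm_sq_to_K]
    simp [← Complex.ofReal_pow]
  change 0 ≤ RCLike.re (inner ℂ (opAbs T y) y) at hpos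
  have hy0 : ‖y‖ ^ 2 = 0 :=
    le_antisymm (nonpos_of_mul_nonpos_right (by linarith) hr) (sq_nonneg _)
  exact sub_eq_zero.mp (norm_eq_zero.mp (pow_eq_zero_iff two_ne_zero |>.mp hy0))

theorem Hyponormal.norm_adjoint_apply_le {T : H →L[ℂ] H} (h : Hyponormal T) (x : H) :
    ‖adjoint T x‖ ≤ ‖T x‖ := by
  have hx := h.re_inner_nonneg_left x
  rw [sub_apply, inner_sub_left, map_sub, sub_nonneg, mul_apply_eq_comp, mul_apply_eq_comp,
    ← comp_apply, ← comp_apply, ← apply_norm_sq_eq_inner_adjoint_left] at hx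
  have hadj := apply_norm_sq_eq_inner_adjoint_left (adjoint T) x
  rw [adjoint_adjoint] at hadj
  rw [← hadj] at hx
  exact (pow_le_pow_iff_left₀ (norm_nonneg _) (norm_nonneg _) two_ne_zero).1 hx

theorem Hyponormal.mapsTo_eigenvectors_norm_sq {T : H →L[ℂ] H} (h : Hyponormal T) :
    Set.MapsTo T {x | adjoint T (T x) = ((‖T‖ : ℂ) ^ 2) • x}
      {x | adjoint T (T x) = ((‖T‖ : ℂ) ^ 2) • x} := fun x (hx : adjoint T (T x) = _) => by
  have hTx : ‖T x‖ = ‖T‖ * ‖x‖ := T.norm_apply_eq_of_adjoint_apply_apply_eq (norm_nonneg T) hx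
  refine T.adjoint_apply_apply_eq_of_norm_apply_eq (le_antisymm (T.le_opNorm _) ?_)
  calc ‖T‖ * ‖T x‖ = ‖adjoint T (T x)‖ := by
        rw [hx, norm_smul, hTx, norm_pow, Complex.norm_real, norm_norm]
        ring
    _ ≤ ‖T (T x)‖ := h.norm_adjoint_apply_le _

theorem exists_block_decomposition (T : H →L[ℂ] H) {c : ℝ} (hc : 0 < c) (M : Submodule ℂ H)
    [M.HasOrthogonalProjection] [FiniteDimensional ℂ Mᗮ] (hinv : ∀ x ∈ M, T x ∈ M)
    (hM : ∀ x ∈ M, adjoint T (T x) = ((c : ℂ) ^ 2) • x) :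
    ∃ S₀ A B : H →L[ℂ] H,
      (∀ x ∈ M, S₀ x ∈ M) ∧ (∀ y ∈ Mᗮ, S₀ y = 0) ∧ (∀ x ∈ M, ‖S₀ x‖ = ‖x‖) ∧
      (∀ y ∈ Mᗮ, A y ∈ M) ∧ (∀ x ∈ M, A x = 0) ∧
      (∀ y ∈ Mᗮ, B y ∈ Mᗮ) ∧ (∀ x ∈ M, B x = 0) ∧
      FiniteDimensional ℂ (LinearMap.range (A : H →ₗ[ℂ] H)) ∧
      FiniteDimensional ℂ (LinearMap.range (B : H →ₗ[ℂ] H)) ∧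
      T = (c : ℂ) • S₀ + A + B ∧ adjoint S₀ * A = 0 ∧
      ∀ y ∈ Mᗮ, ∀ r : ℂ, adjoint T (T y) = r • y → (adjoint (A + B) * (A + B)) y = r • y := by
  set P := M.starProjection
  set Q := Mᗮ.starProjection
  have hPx {x} (hx : x ∈ M) : P x = x := M.starProjection_eq_self_iff.mpr hx
  have hPy {y} (hy : y ∈ Mᗮ) : P y = 0 := M.starProjection_apply_eq_zero_iff.mpr hy
  have hQx {x} (hx : x ∈ M) : Q x = 0 := M.starProjection_orthogonal_apply_eq_zero hx
  have hQy {y} (hy : y ∈ Mᗮ) : Q y = y := Mᗮ.starProjection_eq_self_iff.mpr hy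
  have hPQ : P + Q = 1 := by
    show M.starProjection + Mᗮ.starProjection = 1
    rw [M.starProjection_orthogonal']
    abel
  have hTP : P * T * P = T * P := by
    ext x
    exact hPx (hinv _ (M.starProjection_apply_mem x))
  have hTTP : star T * T * P = ((c : ℂ) ^ 2) • P := by
    ext x
    exact hM _ (M.starProjection_apply_mem x)
  refine ⟨(c⁻¹ : ℂ) • (T * P), P * T * Q, Q * T * Q, fun x hx => ?_, fun y hy => ?_,
    fun x hx => ?_, fun y _ => M.starProjection_apply_mem _, fun x hx => ?_,
    fun y _ => Mᗮ.starProjection_apply_mem _, fun x hx => ?_,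
    finiteDimensional_range_mul_starProjection _ _, finiteDimensional_range_mul_starProjection _ _,
    ?_, ?_, fun y hy r hr => ?_⟩
  · simpa [hPx hx] using M.smul_mem _ (hinv x hx)
  · simp [hPy hy]
  · simp [hPx hx, norm_smul, T.norm_apply_eq_of_adjoint_apply_apply_eq hc.le (hM x hx),
      abs_of_pos hc, inv_mul_cancel_left₀ hc.ne']
  · simp [hQx hx]
  · simp [hQx hx]
  · rw [smul_smul, mul_inv_cancel₀ (by exact_mod_cast hc.ne'), one_smul, add_assoc, ← add_mul,
      ← add_mul, hPQ, one_mul, ← mul_add, hPQ, mul_one]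
  · have hP : star P = P := isSelfAdjoint_starProjection M
    have hTP' : P * star T * P = P * star T := by
      simpa [star_mul, hP, mul_assoc] using congrArg star hTP
    have hTTP' : P * star T * T = ((c : ℂ) ^ 2) • P := by
      simpa [star_mul, hP, mul_assoc] using congrArg star hTTP
    have hPQ0 : P * Q = 0 := by
      ext x
      exact hPy (Mᗮ.starProjection_apply_mem x)
    rw [← star_eq_adjoint, star_smul, star_mul, hP]
    calc star (c⁻¹ : ℂ) • (P * star T) * (P * T * Q)
        = star (c⁻¹ : ℂ) • (P * star T * P * T * Q) := by simp only [smul_mul_assoc, mul_assoc]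
      _ = 0 := by rw [hTP', hTTP', smul_mul_assoc, hPQ0, smul_zero, smul_zero]
  · have hQ : star Q = Q := isSelfAdjoint_starProjection Mᗮ
    rw [← add_mul, ← add_mul, hPQ, one_mul, ← star_eq_adjoint, star_mul, hQ]
    simp only [mul_apply_eq_comp, hQy hy, star_eq_adjoint, hr, map_smul]

theorem hyponormal_AN_structure_top_general (T : H →L[ℂ] H) (hT : T ≠ 0)
    (hhypo : Hyponormal T)
    (hess : essSpectrum (opAbs T) = {(‖T‖ : ℂ)})
    (m₀ : ℕ) (lam : Fin m₀ → ℝ)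
    (hpi : pi00 (opAbs T) = Set.range fun i => (lam i : ℂ))
    (H₁ H₂ : Submodule ℂ H)
    (hH₁ : H₁ = LinearMap.ker ((opAbs T - (‖T‖ : ℂ) • (1 : H →L[ℂ] H) : H →L[ℂ] H) : H →ₗ[ℂ] H))
    (hH₂ : H₂ = ⨆ i : Fin m₀,
      LinearMap.ker ((opAbs T - (lam i : ℂ) • (1 : H →L[ℂ] H) : H →L[ℂ] H) : H →ₗ[ℂ] H)) :
    (∀ x ∈ H₁, ∀ y ∈ H₂, (inner ℂ x y : ℂ) = 0) ∧
    H₁ ⊔ H₂ = ⊤ ∧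
    (∀ x ∈ H₁, T x ∈ H₁) ∧
    ∃ S₀ A B : H →L[ℂ] H,
      (∀ x ∈ H₁, S₀ x ∈ H₁) ∧ (∀ y ∈ H₂, S₀ y = 0) ∧
      (∀ x ∈ H₁, ‖S₀ x‖ = ‖x‖) ∧
      (∀ y ∈ H₂, A y ∈ H₁) ∧ (∀ x ∈ H₁, A x = 0) ∧
      (∀ y ∈ H₂, B y ∈ H₂) ∧ (∀ x ∈ H₁, B x = 0) ∧
      FiniteDimensional ℂ (LinearMap.range (A : H →ₗ[ℂ] H)) ∧
      FiniteDimensional ℂ (LinearMap.range (B : H →ₗ[ℂ] H)) ∧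
      T = (‖T‖ : ℂ) • S₀ + A + B ∧
      ContinuousLinearMap.adjoint S₀ * A = 0 ∧
      (∀ i : Fin m₀,
        ∀ y ∈ LinearMap.ker ((opAbs T - (lam i : ℂ) • (1 : H →L[ℂ] H) : H →L[ℂ] H) : H →ₗ[ℂ] H),
          (ContinuousLinearMap.adjoint (A + B) * (A + B)) y
            = ((lam i : ℂ) ^ 2) • y) := by
  have : IsStarNormal (opAbs T) := (isSelfAdjoint_opAbs T).isStarNormal
  have hTpos : 0 < ‖T‖ := norm_pos_iff.mpr hT
  have hlam (i : Fin m₀) : (lam i : ℂ) ∈ pi00 (opAbs T) := hpi ▸ ⟨i, rfl⟩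
  have horth : H₁ ⟂ H₂ := hH₁ ▸ hH₂ ▸ Submodule.isOrtho_iSup_right.mpr fun i =>
    (isSelfAdjoint_opAbs T).isOrtho_ker_sub_smul_one fun h =>
      IsStarNormal.notMem_essSpectrum_of_mem_pi00 (hlam i) (by rw [hess, h]; rfl)
  have hsup : H₁ ⊔ H₂ = ⊤ := hH₁ ▸ hH₂ ▸ IsStarNormal.ker_sup_iSup_ker_eq_top hess.le hpi.le
  have hH₁mem (x : H) : x ∈ H₁ ↔ adjoint T (T x) = ((‖T‖ : ℂ) ^ 2) • x := by
    rw [hH₁, mem_ker_sub_smul_one_iff, opAbs_apply_eq_smul_iff T hTpos]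
  have hinv (x : H) (hx : x ∈ H₁) : T x ∈ H₁ :=
    (hH₁mem _).mpr (hhypo.mapsTo_eigenvectors_norm_sq ((hH₁mem x).mp hx))
  have : H₁.HasOrthogonalProjection := hH₁ ▸ inferInstance
  have hH₂' : H₂ = H₁ᗮ := horth.eq_orthogonal_of_sup_eq_top hsup
  subst hH₂'
  have : FiniteDimensional ℂ H₁ᗮ := by
    have := fun i => (hlam i).2.2.2
    rw [hH₂]
    infer_instance
  obtain ⟨S₀, A, B, hS₀, hS₀', hS₀iso, hA, hA', hB, hB', hAfin, hBfin, hTeq, hS₀A, hAB⟩ :=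
    exists_block_decomposition T hTpos H₁ hinv fun x hx => (hH₁mem x).mp hx
  exact ⟨fun x hx y hy => horth.inner_eq hx hy, hsup, hinv, S₀, A, B, hS₀, hS₀', hS₀iso, hA, hA',
    hB, hB', hAfin, hBfin, hTeq, hS₀A, fun i y hy => hAB y (hH₂ ▸ Submodule.mem_iSup_of_mem i hy) _
      (adjoint_apply_apply_of_opAbs_apply (mem_ker_sub_smul_one_iff.mp hy))⟩

/-- Structure of a nonzero hyponormal `𝒜𝒩`-operator with `σ_ess(|T|) = {‖T‖}` and
`π₀₀(|T|) = {λ₁, …, λ_{m₀}}` nonempty: with `H₁ = N(|T| - ‖T‖I)` and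
`H₂ = ⊕ᵢ N(|T| - λᵢI)` we get an orthogonal decomposition `H = H₁ ⊕ H₂`, `H₁` is `T`-invariant,
and `T` has the block form `[[‖T‖S₀, A], [0, B]]` where `S₀` is an isometry of `H₁`,
`A : H₂ → H₁` and `B : H₂ → H₂` are finite rank, `S₀*A = 0`, and
`(A+B)*(A+B) = ⊕ᵢ λᵢ² I` on the blocks `N(|T| - λᵢI)`. -/
theorem hyponormal_AN_structure_top (T : H →L[ℂ] H) (hT : T ≠ 0)
    (hhypo : Hyponormal T) (hAN : IsANOperator T)
    (hess : essSpectrum (opAbs T) = {(‖T‖ : ℂ)})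
    (m₀ : ℕ) (hm₀ : 0 < m₀) (lam : Fin m₀ → ℝ)
    (hpi : pi00 (opAbs T) = Set.range fun i => (lam i : ℂ))
    (H₁ H₂ : Submodule ℂ H)
    (hH₁ : H₁ = LinearMap.ker ((opAbs T - (‖T‖ : ℂ) • (1 : H →L[ℂ] H) : H →L[ℂ] H) : H →ₗ[ℂ] H))
    (hH₂ : H₂ = ⨆ i : Fin m₀,
      LinearMap.ker ((opAbs T - (lam i : ℂ) • (1 : H →L[ℂ] H) : H →L[ℂ] H) : H →ₗ[ℂ] H)) :
    (∀ x ∈ H₁, ∀ y ∈ H₂, (inner ℂ x y : ℂ) = 0) ∧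
    H₁ ⊔ H₂ = ⊤ ∧
    (∀ x ∈ H₁, T x ∈ H₁) ∧
    ∃ S₀ A B : H →L[ℂ] H,
      (∀ x ∈ H₁, S₀ x ∈ H₁) ∧ (∀ y ∈ H₂, S₀ y = 0) ∧
      (∀ x ∈ H₁, ‖S₀ x‖ = ‖x‖) ∧
      (∀ y ∈ H₂, A y ∈ H₁) ∧ (∀ x ∈ H₁, A x = 0) ∧
      (∀ y ∈ H₂, B y ∈ H₂) ∧ (∀ x ∈ H₁, B x = 0) ∧
      FiniteDimensional ℂ (LinearMap.range (A : H →ₗ[ℂ] H)) ∧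
      FiniteDimensional ℂ (LinearMap.range (B : H →ₗ[ℂ] H)) ∧
      T = (‖T‖ : ℂ) • S₀ + A + B ∧
      ContinuousLinearMap.adjoint S₀ * A = 0 ∧
      (∀ i : Fin m₀,
        ∀ y ∈ LinearMap.ker ((opAbs T - (lam i : ℂ) • (1 : H →L[ℂ] H) : H →L[ℂ] H) : H →ₗ[ℂ] H),
          (ContinuousLinearMap.adjoint (A + B) * (A + B)) y
            = ((lam i : ℂ) ^ 2) • y) :=
  hyponormal_AN_structure_top_general T hT hhypo hess m₀ lam hpi H₁ H₂ hH₁ hH₂
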